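/- arXiv:0905.0008 — 3 statements merged into one kernel-verified Lean document; each statement's English description precedes it below -/
import Mathlib

section
/- Let W be the Gauss word of an oriented knot diagram with n crossings, where n ≥ 1. Then d(W) + d(-W) + 1 ≤ n. Moreover, equality holds if and only if W is alternating. -/
/-- A Gauss word on `n` labels: each label occurs exactly twice,
once with flag `true` (over-passage) and once with flag `false` (under-passage). -/
def IsGaussWord {n : ℕ} (W : List (Fin n × Bool)) : Prop :=
  ∀ i : Fin n, W.count (i, true) = 1 ∧ W.count (i, false) = 1

/-- Based warping degree: the number of labels whose first occurrence carries flag `false`. -/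
def basedWd {n : ℕ} (W : List (Fin n × Bool)) : ℕ :=
  (Finset.univ.filter fun i : Fin n =>
    W.idxOf (i, false) < W.idxOf (i, true)).card

/-- Warping degree of a Gauss word: minimum of the based warping degree
over all cyclic rotations. -/
noncomputable def wd {n : ℕ} (W : List (Fin n × Bool)) : ℕ :=
  sInf {v | ∃ k : ℕ, v = basedWd (W.rotate k)}

/-- A Gauss word is alternating if the flags of consecutive entries alternate. -/
def IsAlternating {n : ℕ} (W : List (Fin n × Bool)) : Prop :=
  W.Chain' fun x y => y.2 = !x.2

/-- Based linking warping degree for the ordering given by `σ`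
(component `i` precedes `j` when `σ i < σ j`). -/
def ldSigma {r : ℕ} (m : Fin r → Fin r → ℕ) (σ : Equiv.Perm (Fin r)) : ℕ :=
  ∑ p ∈ Finset.univ.filter (fun p : Fin r × Fin r => σ p.1 < σ p.2), m p.1 p.2

/-- Linking warping degree: minimum over all orderings. -/
noncomputable def linkLd {r : ℕ} (m : Fin r → Fin r → ℕ) : ℕ :=
  sInf {v | ∃ σ : Equiv.Perm (Fin r), v = ldSigma m σ}

/-- Linking crossing number: number of non-self crossings. -/
def lcNum {r : ℕ} (m : Fin r → Fin r → ℕ) : ℕ :=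
  ∑ p ∈ Finset.univ.filter (fun p : Fin r × Fin r => p.1 ≠ p.2), m p.1 p.2

/-- Warping degree of an ordered link diagram: minimum over all orderings `σ`
and all choices of cyclic rotations (base points) of the components. -/
noncomputable def linkWd {r : ℕ} {n : Fin r → ℕ} (W : ∀ i, List (Fin (n i) × Bool))
    (m : Fin r → Fin r → ℕ) : ℕ :=
  sInf {v | ∃ (σ : Equiv.Perm (Fin r)) (k : Fin r → ℕ),
    v = (∑ i, basedWd ((W i).rotate (k i))) + ldSigma m σ}

/-- Crossing number of the link diagram. -/
def crossingNum {r : ℕ} (n : Fin r → ℕ) (m : Fin r → Fin r → ℕ) : ℕ :=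
  (∑ i, n i) + ∑ p ∈ Finset.univ.filter (fun p : Fin r × Fin r => p.1 < p.2),
    (m p.1 p.2 + m p.2 p.1)

/-- The number of components having at least one self-crossing. -/
def srNum {r : ℕ} (n : Fin r → ℕ) : ℕ :=
  (Finset.univ.filter fun i : Fin r => 1 ≤ n i).card

/-- Property C: every component word is alternating and, for each pair of distinct
components, the number of over-crossings equals the number of under-crossings. -/
def PropertyC {r : ℕ} {n : Fin r → ℕ} (W : ∀ i, List (Fin (n i) × Bool))
    (m : Fin r → Fin r → ℕ) : Prop :=
  (∀ i, IsAlternating (W i)) ∧ ∀ i j : Fin r, i ≠ j → m i j = m j i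

/-! Let `f k` be the based warping degree of the `k`-th rotation of `W`. Moving the first letter
to the back changes `f` by `+1` for an over-passage and by `-1` for an under-passage, and reversing
a word replaces its based warping degree `b` by `n - b`. Hence `d(W) = min f` and
`d(-W) = n - max f`, so `d(W) + d(-W) = n - (max f - min f)`. Since `f` moves at every step, its
range is at least `1`; it is exactly `1` iff `f` never takes two steps in the same direction, i.e.
iff no two consecutive letters carry the same flag (for a word of even length, alternation along the
list is automatically cyclic). -/

namespace List

variable {α : Type*} [BEq α] [LawfulBEq α] {l : List α} {a b : α}

theorem idxOf_reverse_of_count_eq_one (h : l.count a = 1) :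
    l.reverse.idxOf a = l.length - 1 - l.idxOf a := by
  obtain ⟨s, t, rfl⟩ := append_of_mem (count_pos_iff.1 (by omega : 0 < l.count a))
  have hst : s.count a = 0 ∧ t.count a = 0 := by simp [count_append] at h; omega
  simp [idxOf_append_of_notMem, count_eq_zero.1 hst.1, count_eq_zero.1 hst.2]

theorem idxOf_reverse_lt_idxOf_reverse_iff (ha : l.count a = 1) (hb : l.count b = 1) :
    l.reverse.idxOf a < l.reverse.idxOf b ↔ l.idxOf b < l.idxOf a := by
  have ha' : l.idxOf a < l.length := idxOf_lt_length_of_mem (count_pos_iff.1 (by omega))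
  have hb' : l.idxOf b < l.length := idxOf_lt_length_of_mem (count_pos_iff.1 (by omega))
  rw [idxOf_reverse_of_count_eq_one ha, idxOf_reverse_of_count_eq_one hb]
  omega

end List

theorem wd_le_basedWd_rotate {n : ℕ} (W : List (Fin n × Bool)) (k : ℕ) :
    wd W ≤ basedWd (W.rotate k) :=
  Nat.sInf_le ⟨k, rfl⟩

theorem exists_wd_eq_basedWd_rotate {n : ℕ} (W : List (Fin n × Bool)) :
    ∃ k, wd W = basedWd (W.rotate k) :=
  Nat.sInf_mem (s := {v | ∃ k, v = basedWd (W.rotate k)}) ⟨_, 0, rfl⟩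

section

variable {n : ℕ} {W : List (Fin n × Bool)}

namespace IsAlternating

theorem snd_getLast {x : Fin n × Bool} {T : List (Fin n × Bool)}
    (hA : IsAlternating (x :: T)) :
    ((x :: T).getLast (List.cons_ne_nil x T)).2 = (x.2 ^^ decide (Odd T.length)) := by
  induction T generalizing x with
  | nil => simp
  | cons y T ih =>
    have hxy : y.2 = !x.2 := (List.isChain_cons_cons.1 hA).1
    rw [List.getLast_cons_cons, ih (List.isChain_cons_cons.1 hA).2, hxy]
    cases x.2 <;> simp [Nat.odd_add_one, ← Nat.not_even_iff_odd]

theorem rotate_one (hA : IsAlternating W) (he : Even W.length) : IsAlternating (W.rotate 1) := by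
  match W, hA, he with
  | [], hA, _ => exact hA
  | [_], _, he => simp at he
  | x :: y :: T, hA, he =>
    obtain ⟨hxy, hA'⟩ := List.isChain_cons_cons.1 hA
    have hT : ¬Odd T.length := Nat.not_odd_iff_even.2 (by simpa [Nat.even_add_one] using he)
    rw [List.rotate_cons_succ, List.rotate_zero]
    refine List.IsChain.append hA' (List.isChain_singleton x) ?_
    have hlast := snd_getLast (x := y) (T := T) hA'
    simp [List.getLast?_eq_some_getLast (List.cons_ne_nil y T), hlast, hxy, hT]

theorem rotate (hA : IsAlternating W) (he : Even W.length) (k : ℕ) :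
    IsAlternating (W.rotate k) := by
  induction k with
  | zero => simpa
  | succ k ih =>
    rw [← List.rotate_rotate]
    exact ih.rotate_one (by rwa [List.length_rotate])

end IsAlternating

namespace IsGaussWord

theorem count_eq_one (hW : IsGaussWord W) (i : Fin n) (b : Bool) : W.count (i, b) = 1 := by
  cases b
  exacts [(hW i).2, (hW i).1]

theorem mem (hW : IsGaussWord W) (i : Fin n) (b : Bool) : (i, b) ∈ W :=
  List.count_pos_iff.1 (by rw [hW.count_eq_one]; exact one_pos)

theorem length_eq (hW : IsGaussWord W) : W.length = 2 * n := by
  have h := Multiset.sum_count_eq_card (s := Finset.univ) (m := (W : Multiset (Fin n × Bool)))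
    (fun _ _ => Finset.mem_univ _)
  rw [← Multiset.coe_card, ← h, Fintype.sum_prod_type]
  simp only [Fintype.sum_bool, Multiset.coe_count]
  -- `Multiset.count` uses the `BEq` derived from `DecidableEq`, `IsGaussWord` uses `instBEqProd`
  rw [lawful_beq_subsingleton instBEqOfDecidableEq instBEqProd]
  simp [hW.count_eq_one, mul_comm]

theorem rotate (hW : IsGaussWord W) (k : ℕ) : IsGaussWord (W.rotate k) := fun i => by
  simpa only [(W.rotate_perm k).count_eq] using hW i

theorem basedWd_add_basedWd_reverse (hW : IsGaussWord W) :
    basedWd W + basedWd W.reverse = n := by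
  have hflip (i : Fin n) : W.reverse.idxOf (i, false) < W.reverse.idxOf (i, true) ↔
      ¬ W.idxOf (i, false) < W.idxOf (i, true) := by
    have hne : W.idxOf (i, false) ≠ W.idxOf (i, true) := by
      simp [List.idxOf_inj (hW.mem i false)]
    rw [List.idxOf_reverse_lt_idxOf_reverse_iff (hW.count_eq_one i false) (hW.count_eq_one i true)]
    omega
  simpa [basedWd, hflip] using Finset.card_filter_add_card_filter_not (s := Finset.univ)
    (fun i : Fin n => W.idxOf (i, false) < W.idxOf (i, true))

theorem basedWd_rotate_one {x : Fin n × Bool} {T : List (Fin n × Bool)}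
    (hW : IsGaussWord (x :: T)) :
    (basedWd ((x :: T).rotate 1) : ℤ) = basedWd (x :: T) + if x.2 then 1 else -1 := by
  obtain ⟨c, b⟩ := x
  have hx : (c, b) ∉ T := by
    have := hW.count_eq_one c b
    simp only [List.count_cons_self] at this
    exact List.count_eq_zero.1 (by omega)
  have hT (i : Fin n) (b' : Bool) (h : (i, b') ≠ (c, b)) : (i, b') ∈ T := by
    simpa [h] using hW.mem i b'
  simp only [List.rotate_cons_succ, List.rotate_zero, basedWd, Finset.card_filter, Nat.cast_sum]
  -- moving `(c, b)` to the back changes the status of the label `c` only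
  rw [← sub_eq_iff_eq_add', ← Finset.sum_sub_distrib, Fintype.sum_eq_single c]
  · have hmem : (c, !b) ∈ T := hT c (!b) (by simp)
    have hlt := List.idxOf_lt_length_of_mem hmem
    cases b <;> simp only [Bool.not_false, Bool.not_true] at hmem hlt <;>
      simp [List.idxOf_append_of_notMem hx, List.idxOf_append_of_mem hmem, hlt, hlt.le]
  · intro i hi
    have hi' (b' : Bool) : (i, b') ≠ (c, b) := by simp [hi]
    simp [List.idxOf_append_of_mem (hT i _ (hi' _)), List.idxOf_cons_ne _ (hi' _).symm]

theorem basedWd_rotate_two {x y : Fin n × Bool} {T : List (Fin n × Bool)}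
    (hW : IsGaussWord (x :: y :: T)) :
    (basedWd ((x :: y :: T).rotate 2) : ℤ) =
      basedWd (x :: y :: T) + (if x.2 then 1 else -1) + (if y.2 then 1 else -1) := by
  have hrot : (x :: y :: T).rotate 1 = y :: (T ++ [x]) := by simp
  have hW' : IsGaussWord (y :: (T ++ [x])) := hrot ▸ hW.rotate 1
  rw [show 2 = 1 + 1 from rfl, ← List.rotate_rotate, hrot, hW'.basedWd_rotate_one, ← hrot,
    hW.basedWd_rotate_one]

theorem wd_reverse_add_basedWd_rotate_le (hW : IsGaussWord W) (k : ℕ) :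
    wd W.reverse + basedWd (W.rotate k) ≤ n := by
  have h := (hW.rotate k).basedWd_add_basedWd_reverse
  rw [List.reverse_rotate] at h
  have := wd_le_basedWd_rotate W.reverse (W.length - k % W.length)
  omega

theorem exists_wd_reverse_add_basedWd_rotate_eq (hW : IsGaussWord W) :
    ∃ k, wd W.reverse + basedWd (W.rotate k) = n := by
  obtain ⟨k, hk⟩ := exists_wd_eq_basedWd_rotate W.reverse
  refine ⟨W.length - k % W.length, ?_⟩
  have := (hW.rotate (W.length - k % W.length)).basedWd_add_basedWd_reverse
  rw [hk, List.rotate_reverse]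
  omega

theorem wd_add_wd_reverse_add_le_iff (hW : IsGaussWord W) (s : ℕ) :
    wd W + wd W.reverse + s ≤ n ↔
      ∃ j k, basedWd (W.rotate j) + s ≤ basedWd (W.rotate k) := by
  constructor
  · intro h
    obtain ⟨j, hj⟩ := exists_wd_eq_basedWd_rotate W
    obtain ⟨k, hk⟩ := hW.exists_wd_reverse_add_basedWd_rotate_eq
    exact ⟨j, k, by omega⟩
  · rintro ⟨j, k, h⟩
    have := wd_le_basedWd_rotate W j
    have := hW.wd_reverse_add_basedWd_rotate_le k
    omega

theorem exists_basedWd_rotate_add_one_le (hW : IsGaussWord W) (hn : 0 < n) :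
    ∃ j k, basedWd (W.rotate j) + 1 ≤ basedWd (W.rotate k) := by
  obtain ⟨x, T, rfl⟩ :=
    List.exists_cons_of_ne_nil (List.ne_nil_of_mem (hW.mem ⟨0, hn⟩ true))
  have h := hW.basedWd_rotate_one
  cases hx : x.2 <;> simp only [hx, Bool.false_eq_true, ↓reduceIte] at h
  · exact ⟨1, 0, by simp only [List.rotate_zero]; omega⟩
  · exact ⟨0, 1, by simp only [List.rotate_zero]; omega⟩

theorem exists_basedWd_rotate_add_two_le (hW : IsGaussWord W) (hA : ¬IsAlternating W) :
    ∃ j k, basedWd (W.rotate j) + 2 ≤ basedWd (W.rotate k) := by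
  obtain ⟨i, hi, hne⟩ := List.exists_not_getElem_of_not_isChain hA
  have hrot : W.rotate i = W[i] :: W[i + 1] :: (W.drop (i + 2) ++ W.take i) := by
    rw [List.rotate_eq_drop_append_take (by omega), List.drop_eq_getElem_cons (by omega),
      List.drop_eq_getElem_cons (by omega)]
    rfl
  have h := (hrot ▸ hW.rotate i).basedWd_rotate_two
  rw [← hrot, List.rotate_rotate] at h
  have heq : W[i + 1].2 = W[i].2 := by revert hne; cases W[i].2 <;> cases W[i + 1].2 <;> simp
  cases hx : W[i].2 <;> simp only [hx, heq, Bool.false_eq_true, ↓reduceIte] at h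
  · exact ⟨i + 2, i, by omega⟩
  · exact ⟨i, i + 2, by omega⟩

theorem basedWd_rotate_add_two (hW : IsGaussWord W) (hA : IsAlternating W) (k : ℕ) :
    basedWd (W.rotate (k + 2)) = basedWd (W.rotate k) := by
  rw [← List.rotate_rotate]
  have hAk := hA.rotate (by simp [hW.length_eq]) k
  have hWk := hW.rotate k
  generalize W.rotate k = V at hAk hWk
  match V with
  | [] | [_] => simp
  | x :: y :: T =>
    have hxy : y.2 = !x.2 := (List.isChain_cons_cons.1 hAk).1
    have h := hWk.basedWd_rotate_two
    cases hx : x.2 <;>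
      simp only [hx, hxy, Bool.not_false, Bool.not_true, Bool.false_eq_true, ↓reduceIte] at h <;>
      omega

theorem basedWd_rotate_le_add_one (hW : IsGaussWord W) (hA : IsAlternating W) (j k : ℕ) :
    basedWd (W.rotate k) ≤ basedWd (W.rotate j) + 1 := by
  have hper : Function.Periodic (fun k => basedWd (W.rotate k)) 2 := hW.basedWd_rotate_add_two hA
  have h01 : basedWd (W.rotate 1) ≤ basedWd (W.rotate 0) + 1 ∧
      basedWd (W.rotate 0) ≤ basedWd (W.rotate 1) + 1 := by
    match W, hW with
    | [], _ => simp
    | x :: T, hW =>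
      have h := hW.basedWd_rotate_one
      rw [List.rotate_zero]
      split_ifs at h <;> omega
  rw [← hper.map_mod_nat k, ← hper.map_mod_nat j]
  rcases Nat.mod_two_eq_zero_or_one j with hj | hj <;>
    rcases Nat.mod_two_eq_zero_or_one k with hk | hk <;> simp only [hj, hk] <;> omega

end IsGaussWord

end

/-- for a knot diagram with `n ≥ 1` crossings,
`d(W) + d(-W) + 1 ≤ n`, with equality iff `W` is alternating. -/
theorem warping_degree_sum_knot (n : ℕ) (hn : 1 ≤ n)
    (W : List (Fin n × Bool)) (hW : IsGaussWord W) :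
    wd W + wd W.reverse + 1 ≤ n ∧
    (wd W + wd W.reverse + 1 = n ↔ IsAlternating W) := by
  have hle : wd W + wd W.reverse + 1 ≤ n :=
    (hW.wd_add_wd_reverse_add_le_iff 1).2 (hW.exists_basedWd_rotate_add_one_le hn)
  refine ⟨hle, ⟨fun heq => ?_, fun hA => ?_⟩⟩
  · by_contra hA
    have := (hW.wd_add_wd_reverse_add_le_iff 2).2 (hW.exists_basedWd_rotate_add_two_le hA)
    omega
  · by_contra hne
    obtain ⟨j, k, h⟩ := (hW.wd_add_wd_reverse_add_le_iff 2).1 (by omega)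
    have := hW.basedWd_rotate_le_add_one hA j k
    omega
end

section
/- The linking warping degree satisfies 2·ld ≤ lc. Moreover, equality holds if and only if m i j = m j i for all i ≠ j (i.e., for every pair of components, the number of over-crossings of one component over the other equals the number of its under-crossings). -/
/-! Reversing an ordering `σ` turns each counted pair `(i, j)` into `(j, i)`, so
`ld_σ + ld_{rev σ} = lc` for every `σ`. Hence `2 ld ≤ lc`, with equality when `m` is symmetric,
since then both summands agree. Conversely, if `2 ld = lc` then every `ld_σ` equals `ld`;
but exchanging two components `i, j` that are adjacent in an ordering changes `ld_σ` by
`m j i - m i j`, so `m i j = m j i`. -/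

theorem CovBy.swap_lt_swap_iff {α : Type*} [LinearOrder α] {a b x y : α} (hab : a ⋖ b)
    (hxy : ¬(x = a ∧ y = b)) (hyx : ¬(x = b ∧ y = a)) :
    Equiv.swap a b x < Equiv.swap a b y ↔ x < y := by
  have hlt : ∀ c, c ≠ b → (a < c ↔ b < c) := fun c hc =>
    ⟨fun h => (hab.ge_of_gt h).lt_of_ne hc.symm, hab.lt.trans⟩
  have hgt : ∀ c, c ≠ a → (c < b ↔ c < a) := fun c hc =>
    ⟨fun h => (hab.le_of_lt h).lt_of_ne hc, fun h => h.trans hab.lt⟩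
  rw [Equiv.swap_apply_def, Equiv.swap_apply_def]
  split_ifs <;> simp_all

theorem Equiv.Perm.exists_apply_eq_and_apply_eq {α : Type*} [DecidableEq α] {i j a b : α}
    (hij : i ≠ j) (hab : a ≠ b) : ∃ σ : Equiv.Perm α, σ i = a ∧ σ j = b := by
  have hj : Equiv.swap i a j ≠ a := fun h => hij ((Equiv.swap_apply_eq_iff.1 h).trans
    (Equiv.swap_apply_right i a)).symm
  refine ⟨(Equiv.swap i a).trans (Equiv.swap (Equiv.swap i a j) b), ?_, ?_⟩
  · simp [Equiv.swap_apply_of_ne_of_ne hj.symm hab]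
  · simp

section LinkingWarpingDegree

variable {r : ℕ} (m : Fin r → Fin r → ℕ) (σ : Equiv.Perm (Fin r))

theorem ldSigma_add_ldSigma_trans_revPerm :
    ldSigma m σ + ldSigma m (σ.trans Fin.revPerm) = lcNum m := by
  rw [ldSigma, ldSigma, lcNum, ← Finset.sum_union]
  · congr 1
    ext p
    simp only [Finset.mem_union, Finset.mem_filter, Finset.mem_univ, true_and,
      Equiv.trans_apply, Fin.revPerm_apply, Fin.rev_lt_rev]
    exact lt_or_lt_iff_ne.trans σ.injective.ne_iff
  · refine Finset.disjoint_filter.2 fun p _ h => ?_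
    simpa using h.le

theorem ldSigma_trans_revPerm_of_symm (hm : ∀ i j, i ≠ j → m i j = m j i) :
    ldSigma m (σ.trans Fin.revPerm) = ldSigma m σ := by
  refine Finset.sum_nbij' Prod.swap Prod.swap (by simp) (by simp) (by simp) (by simp) ?_
  intro p hp
  simp only [Finset.mem_filter, Finset.mem_univ, true_and, Equiv.trans_apply, Fin.revPerm_apply,
    Fin.rev_lt_rev] at hp
  exact hm _ _ fun h => hp.ne (by rw [h])

theorem linkLd_le_ldSigma : linkLd m ≤ ldSigma m σ :=
  Nat.sInf_le ⟨σ, rfl⟩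

theorem exists_ldSigma_eq_linkLd : ∃ σ : Equiv.Perm (Fin r), ldSigma m σ = linkLd m := by
  obtain ⟨σ, hσ⟩ := Nat.sInf_mem (⟨_, 1, rfl⟩ : {v | ∃ σ, v = ldSigma m σ}.Nonempty)
  exact ⟨σ, hσ.symm⟩

theorem two_mul_linkLd_le_lcNum : 2 * linkLd m ≤ lcNum m := by
  rw [two_mul, ← ldSigma_add_ldSigma_trans_revPerm m 1]
  exact add_le_add (linkLd_le_ldSigma m _) (linkLd_le_ldSigma m _)

theorem ldSigma_eq_linkLd_of_two_mul_eq (h : 2 * linkLd m = lcNum m) :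
    ldSigma m σ = linkLd m := by
  have := ldSigma_add_ldSigma_trans_revPerm m σ
  have := linkLd_le_ldSigma m σ
  have := linkLd_le_ldSigma m (σ.trans Fin.revPerm)
  omega

theorem ldSigma_trans_swap_add {a b : Fin r} (hab : a ⋖ b) {i j : Fin r} (hi : σ i = a)
    (hj : σ j = b) : ldSigma m (σ.trans (Equiv.swap a b)) + m i j = ldSigma m σ + m j i := by
  have hij : i ≠ j := fun h => hab.lt.ne (hi ▸ hj ▸ congrArg σ h)
  -- Only the pair {i, j} changes its relative order.
  have hsets : insert (j, i) (Finset.univ.filter fun p : Fin r × Fin r => σ p.1 < σ p.2) =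
      insert (i, j) (Finset.univ.filter fun p : Fin r × Fin r =>
        σ.trans (Equiv.swap a b) p.1 < σ.trans (Equiv.swap a b) p.2) := by
    ext ⟨x, y⟩
    simp only [Finset.mem_insert, Finset.mem_filter, Finset.mem_univ, true_and, Prod.mk.injEq]
    rw [Equiv.trans_apply, Equiv.trans_apply]
    by_cases hxy : x = i ∧ y = j
    · obtain ⟨rfl, rfl⟩ := hxy
      simp [hi, hj, hab.lt]
    by_cases hyx : x = j ∧ y = i
    · obtain ⟨rfl, rfl⟩ := hyx
      simp [hi, hj, hab.lt]
    rw [hab.swap_lt_swap_iff]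
    · simp [hxy, hyx]
    all_goals rwa [← hi, ← hj, σ.injective.eq_iff, σ.injective.eq_iff]
  have := congrArg (fun s => ∑ p ∈ s, m p.1 p.2) hsets
  rw [Finset.sum_insert (by simp [hi, hj, hab.lt.not_gt]),
    Finset.sum_insert (by rw [Finset.mem_filter]; simp [hi, hj, hab.le])] at this
  dsimp only at this
  rw [ldSigma, ldSigma]
  omega

theorem symm_of_forall_ldSigma_eq {c : ℕ} (h : ∀ σ, ldSigma m σ = c) {i j : Fin r}
    (hij : i ≠ j) : m i j = m j i := by
  obtain ⟨b, hab, -⟩ := exists_covBy_le_of_lt (min_lt_max.2 hij)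
  obtain ⟨σ, hi, hj⟩ := Equiv.Perm.exists_apply_eq_and_apply_eq hij hab.lt.ne
  have := ldSigma_trans_swap_add m σ hab hi hj
  rw [h, h] at this
  omega

theorem two_mul_linkLd_eq_lcNum_of_symm (hm : ∀ i j, i ≠ j → m i j = m j i) :
    2 * linkLd m = lcNum m := by
  obtain ⟨σ, hσ⟩ := exists_ldSigma_eq_linkLd m
  rw [← hσ, two_mul, ← ldSigma_add_ldSigma_trans_revPerm m σ,
    ldSigma_trans_revPerm_of_symm m σ hm]

end LinkingWarpingDegree

theorem two_ld_le_lc_general (r : ℕ) (m : Fin r → Fin r → ℕ) :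
    2 * linkLd m ≤ lcNum m ∧
    (2 * linkLd m = lcNum m ↔ ∀ i j : Fin r, i ≠ j → m i j = m j i) :=
  ⟨two_mul_linkLd_le_lcNum m,
    fun h _ _ => symm_of_forall_ldSigma_eq m (ldSigma_eq_linkLd_of_two_mul_eq m · h),
    two_mul_linkLd_eq_lcNum_of_symm m⟩

/-- `2·ld ≤ lc`, with equality iff `m i j = m j i` for all `i ≠ j`. -/
theorem two_ld_le_lc (r : ℕ) (m : Fin r → Fin r → ℕ) (hm : ∀ i, m i i = 0) :
    2 * linkLd m ≤ lcNum m ∧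
    (2 * linkLd m = lcNum m ↔ ∀ i j : Fin r, i ≠ j → m i j = m j i) :=
  two_ld_le_lc_general r m
end

section
/- If a Gauss word W has n ≥ 1 crossings, then the based warping degree is not constant over cyclic rotations: the maximum of the based warping degree over all cyclic rotations of W is at least the minimum over all cyclic rotations plus 1. -/
/- Moving the first letter `(i, b)` of a Gauss word to the end keeps the relative order of the two
occurrences of every other label, and reverses it for label `i`: before the move `(i, b)` comes
first, after it `(i, !b)` does. So the based warping degrees of these two rotations differ. -/

namespace List

variable {α : Type*} [BEq α] [LawfulBEq α] {x c d : α} {l : List α}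

theorem idxOf_lt_idxOf_append_singleton_iff (hc : c ∈ l) (hd : d ∈ l) (hcx : c ≠ x)
    (hdx : d ≠ x) :
    (l ++ [x]).idxOf c < (l ++ [x]).idxOf d ↔ (x :: l).idxOf c < (x :: l).idxOf d := by
  rw [idxOf_append_of_mem hc, idxOf_append_of_mem hd, idxOf_cons_ne _ hcx.symm,
    idxOf_cons_ne _ hdx.symm, Nat.succ_lt_succ_iff]

theorem idxOf_cons_self_lt_idxOf (hdx : d ≠ x) : (x :: l).idxOf x < (x :: l).idxOf d := by
  simp [idxOf_cons_ne _ hdx.symm]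

theorem idxOf_lt_idxOf_append_singleton_self (hx : x ∉ l) (hd : d ∈ l) :
    (l ++ [x]).idxOf d < (l ++ [x]).idxOf x := by
  rw [idxOf_append_of_mem hd, idxOf_append_of_notMem hx, idxOf_cons_self]
  exact idxOf_lt_length_of_mem hd

end List

theorem Finset.card_ne_card_of_mem_iff_of_ne {α : Type*} [DecidableEq α] {s t : Finset α}
    {a : α} (hne : ∀ b ≠ a, b ∈ s ↔ b ∈ t) (ha : a ∈ s ↔ a ∉ t) : s.card ≠ t.card := by
  have herase : s.erase a = t.erase a := by
    ext b
    by_cases hb : b = a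
    · simp [hb]
    · simp [hb, hne b hb]
  by_cases hat : a ∈ t
  · rw [← erase_eq_of_notMem (ha.not_left.mpr hat), herase, ← card_erase_add_one hat]
    omega
  · rw [← card_erase_add_one (ha.mpr hat), herase, erase_eq_of_notMem hat]
    omega

theorem Nat.sInf_add_one_le_sSup {s : Set ℕ} (hs : BddAbove s) {a b : ℕ} (ha : a ∈ s)
    (hb : b ∈ s) (hab : a ≠ b) : sInf s + 1 ≤ sSup s := by
  rcases hab.lt_or_gt with h | h
  · exact (Nat.add_le_add_right (Nat.sInf_le ha) 1).trans (h.trans_le (le_csSup hs hb))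
  · exact (Nat.add_le_add_right (Nat.sInf_le hb) 1).trans (h.trans_le (le_csSup hs ha))

section GaussWord

variable {n : ℕ} {W : List (Fin n × Bool)}

theorem IsGaussWord.mem_s9 (hW : IsGaussWord W) (x : Fin n × Bool) : x ∈ W := by
  obtain ⟨i, b⟩ := x
  apply List.count_pos_iff.mp
  cases b
  · simp [(hW i).2]
  · simp [(hW i).1]

theorem IsGaussWord.ne_nil (hW : IsGaussWord W) (hn : 1 ≤ n) : W ≠ [] :=
  List.ne_nil_of_mem (hW.mem_s9 (⟨0, hn⟩, true))

theorem basedWd_le (W : List (Fin n × Bool)) : basedWd W ≤ n :=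
  (Finset.card_filter_le _ _).trans (Finset.card_fin n).le

theorem basedWd_rotate_one_ne {x : Fin n × Bool} {T : List (Fin n × Bool)}
    (hW : IsGaussWord (x :: T)) : basedWd ((x :: T).rotate 1) ≠ basedWd (x :: T) := by
  obtain ⟨i, b⟩ := x
  have hcount : (((i, b) :: T).count (i, b)) = 1 := by cases b <;> simp [hW i]
  have hxT : (i, b) ∉ T := List.count_eq_zero.mp (by simpa using hcount)
  have hmem : ∀ y, y ≠ (i, b) → y ∈ T := fun y hy =>
    (List.mem_cons.mp (hW.mem_s9 y)).resolve_left hy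
  rw [List.rotate_cons_succ, List.rotate_zero]
  refine Finset.card_ne_card_of_mem_iff_of_ne (a := i) (fun j hj => ?_) ?_
  · have hji : ∀ c, (j, c) ≠ (i, b) := by simp [hj]
    simp only [Finset.mem_filter, Finset.mem_univ, true_and]
    exact List.idxOf_lt_idxOf_append_singleton_iff (hmem _ (hji _)) (hmem _ (hji _))
      (hji _) (hji _)
  · simp only [Finset.mem_filter, Finset.mem_univ, true_and]
    have hhead := List.idxOf_cons_self_lt_idxOf (l := T) (x := (i, b)) (d := (i, !b)) (by simp)
    have hlast := List.idxOf_lt_idxOf_append_singleton_self hxT (hmem (i, !b) (by simp))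
    cases b <;> simp only [Bool.not_false, Bool.not_true] at hhead hlast <;> omega

end GaussWord

/-- if `n ≥ 1`, the based warping degree is not constant over
the cyclic rotations: its maximum exceeds its minimum by at least 1. -/
theorem basedWd_rotations_not_constant (n : ℕ) (hn : 1 ≤ n)
    (W : List (Fin n × Bool)) (hW : IsGaussWord W) :
    sInf {v | ∃ k : ℕ, v = basedWd (W.rotate k)} + 1 ≤
      sSup {v | ∃ k : ℕ, v = basedWd (W.rotate k)} := by
  obtain ⟨x, T, rfl⟩ := List.exists_cons_of_ne_nil (hW.ne_nil hn)
  have hbdd : BddAbove {v | ∃ k : ℕ, v = basedWd ((x :: T).rotate k)} := by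
    refine ⟨n, ?_⟩
    rintro _ ⟨k, rfl⟩
    exact basedWd_le _
  exact Nat.sInf_add_one_le_sSup hbdd ⟨0, by simp⟩ ⟨1, rfl⟩ (basedWd_rotate_one_ne hW).symm
end
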